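/- Consecutive flat triangles of a local trajectory share an edge (upward step): for every a ∈ ℤ³ and distinct i,j ∈ {1,2,3}, the intersection π(T(a;i,j)) ∩ π(T(a−eⱼ;j,i)) equals the projected segment π([a, a+eᵢ]), i.e. the image under π of the convex hull of {a, a+eᵢ}. -/

import Mathlib

noncomputable section

/-- Ambient space ℝ³. -/
abbrev E3 := EuclideanSpace ℝ (Fin 3)

/-- Standard basis vector eᵢ of ℝ³. -/
def ee3 (i : Fin 3) : E3 := EuclideanSpace.single i 1

/-- 𝟙 = e₁ + e₂ + e₃. -/
def ones3 : E3 := ∑ i, ee3 i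

/-- Orthogonal projection π onto the hyperplane H = {v ∈ ℝ³ : v₁+v₂+v₃ = 0},
    given by π(v) = v − ((v₁+v₂+v₃)/3)·𝟙. -/
def proj3 (v : E3) : E3 := v - ((∑ i, v i) / 3) • ones3

/-- A lattice point of ℤ³ viewed in ℝ³. -/
def toE3 (a : Fin 3 → ℤ) : E3 := WithLp.toLp 2 (fun n => (a n : ℝ))

/-- Slant triangle T(a;i,j) = conv{a, a+eᵢ, a+eᵢ+eⱼ}. -/
def slant3 (a : Fin 3 → ℤ) (i j : Fin 3) : Set E3 :=
  convexHull ℝ {toE3 a, toE3 a + ee3 i, toE3 a + ee3 i + ee3 j}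

/-- Flat triangle: the image π(T(a;i,j)). -/
def flat3 (a : Fin 3 → ℤ) (i j : Fin 3) : Set E3 := proj3 '' slant3 a i j

/-!
The functional `g v = v j - v k` (`k` the third index) kills `𝟙`, so `g ∘ π = g`. It is
constant on the edge `[a, a + eᵢ]`, and at the remaining vertices `a + eᵢ + eⱼ` and `a - eⱼ`
of the two slant triangles it takes the values `g a + 1` and `g a - 1`. Hence the two flat
triangles lie in opposite closed half-planes bounded by the line `g = g a`, and each meets that
line only in the projected edge.
-/

section ConvexHullLevel

variable {𝕜 V : Type*} [Field 𝕜] [LinearOrder 𝕜] [IsStrictOrderedRing 𝕜]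
  [AddCommGroup V] [Module 𝕜 V]

theorem convexHull_subset_level {g : V →ₗ[𝕜] 𝕜} {s : Set V} {c : 𝕜}
    (hs : ∀ y ∈ s, g y = c) : convexHull 𝕜 s ⊆ {y | g y = c} :=
  convexHull_min hs (by simpa using (convex_hyperplane g.isLinear c))

theorem le_and_mem_convexHull_of_mem_convexHull_insert {g : V →ₗ[𝕜] 𝕜} {s : Set V} {c : 𝕜}
    {r x : V} (hs_ne : s.Nonempty) (hs : ∀ y ∈ s, g y = c) (hr : c < g r)
    (hx : x ∈ convexHull 𝕜 (insert r s)) : c ≤ g x ∧ (g x = c → x ∈ convexHull 𝕜 s) := by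
  rw [convexHull_insert hs_ne] at hx
  obtain ⟨r, rfl, y, hy, u, v, hu, -, huv, rfl⟩ := mem_convexJoin.mp hx
  have hgy : g y = c := convexHull_subset_level hs hy
  have hgx : g (u • r + v • y) = c + u * (g r - c) := by
    rw [map_add, map_smul, map_smul, hgy, smul_eq_mul, smul_eq_mul, eq_sub_of_add_eq' huv]
    ring
  rw [hgx]
  refine ⟨le_add_of_nonneg_right (mul_nonneg hu (sub_nonneg.mpr hr.le)), fun h => ?_⟩
  obtain rfl : u = 0 := by
    simpa [(sub_pos.mpr hr).ne'] using h
  obtain rfl : v = 1 := by simpa using huv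
  simpa using hy

theorem convexHull_insert_inter_convexHull_insert {g : V →ₗ[𝕜] 𝕜} {s : Set V} {c : 𝕜}
    {r r' : V} (hs_ne : s.Nonempty) (hs : ∀ y ∈ s, g y = c) (hr : c < g r) (hr' : g r' < c) :
    convexHull 𝕜 (insert r s) ∩ convexHull 𝕜 (insert r' s) = convexHull 𝕜 s := by
  refine subset_antisymm (fun x ⟨hx, hx'⟩ => ?_)
    (Set.subset_inter (convexHull_mono (Set.subset_insert r s))
      (convexHull_mono (Set.subset_insert r' s)))
  have above := le_and_mem_convexHull_of_mem_convexHull_insert hs_ne hs hr hx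
  have below := le_and_mem_convexHull_of_mem_convexHull_insert (g := -g) (c := -c) hs_ne
    (fun y hy => by simp [hs y hy]) (by simpa using hr') hx'
  simp only [LinearMap.neg_apply, neg_le_neg_iff] at below
  exact above.2 (le_antisymm below.1 above.1)

end ConvexHullLevel

def proj3Linear : E3 →ₗ[ℝ] E3 where
  toFun := proj3
  map_add' x y := by
    simp only [proj3, PiLp.add_apply, Finset.sum_add_distrib, add_div, add_smul]
    abel
  map_smul' c x := by
    simp only [proj3, PiLp.smul_apply, smul_eq_mul, ← Finset.mul_sum, RingHom.id_apply,
      mul_div_assoc, mul_smul, smul_sub]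

theorem proj3_image_convexHull (s : Set E3) :
    proj3 '' convexHull ℝ s = convexHull ℝ (proj3 '' s) :=
  proj3Linear.image_convexHull s

theorem ee3_apply (i m : Fin 3) : ee3 i m = if m = i then 1 else 0 := by
  simp [ee3]

theorem ones3_apply (m : Fin 3) : ones3 m = 1 := by
  simp [ones3, ee3_apply, Finset.sum_apply]

theorem toE3_sub_single (a : Fin 3 → ℤ) (j : Fin 3) :
    toE3 (a - Pi.single j 1) = toE3 a - ee3 j := by
  ext m
  by_cases h : m = j <;> simp [toE3, ee3_apply, Pi.single_apply, h]

/-- For `i ≠ j` this is `v j - v k` with `k` the third index, written without naming `k`. -/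
def edgeFunctional (i j : Fin 3) : E3 →ₗ[ℝ] ℝ where
  toFun v := v i + 2 * v j - ∑ m, v m
  map_add' x y := by simp only [PiLp.add_apply, Finset.sum_add_distrib]; ring
  map_smul' c x := by simp only [PiLp.smul_apply, smul_eq_mul, ← Finset.mul_sum]; simp; ring

theorem edgeFunctional_apply (i j : Fin 3) (v : E3) :
    edgeFunctional i j v = v i + 2 * v j - ∑ m, v m := rfl

theorem edgeFunctional_ones3 (i j : Fin 3) : edgeFunctional i j ones3 = 0 := by
  simp [edgeFunctional_apply, ones3_apply]; norm_num

theorem edgeFunctional_proj3 (i j : Fin 3) (v : E3) :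
    edgeFunctional i j (proj3 v) = edgeFunctional i j v := by
  simp [proj3, edgeFunctional_ones3]

theorem edgeFunctional_ee3_left {i j : Fin 3} (hij : i ≠ j) : edgeFunctional i j (ee3 i) = 0 := by
  simp [edgeFunctional_apply, ee3_apply, Ne.symm hij]

theorem edgeFunctional_ee3_right {i j : Fin 3} (hij : i ≠ j) :
    edgeFunctional i j (ee3 j) = 1 := by
  simp [edgeFunctional_apply, ee3_apply, hij]; norm_num

/-- π(T(a;i,j)) ∩ π(T(a−eⱼ;j,i)) equals the projected segment
π([a, a+eᵢ]). -/
theorem stmt6 (a : Fin 3 → ℤ) (i j : Fin 3) (hij : i ≠ j) :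
    flat3 a i j ∩ flat3 (a - Pi.single j 1) j i =
      proj3 '' convexHull ℝ {toE3 a, toE3 a + ee3 i} := by
  set g := edgeFunctional i j
  set p := toE3 a
  have hs : ∀ y ∈ proj3 '' {p, p + ee3 i}, g y = g p := by
    rintro _ ⟨y, rfl | rfl, rfl⟩
    · simp [g, edgeFunctional_proj3]
    · simp [g, edgeFunctional_proj3, edgeFunctional_ee3_left hij]
  have hr : g p < g (proj3 (p + ee3 i + ee3 j)) := by
    simp [g, edgeFunctional_proj3, edgeFunctional_ee3_left hij, edgeFunctional_ee3_right hij]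
  have hr' : g (proj3 (p - ee3 j)) < g p := by
    simp [g, edgeFunctional_proj3, edgeFunctional_ee3_right hij]
  have base : ({p, p + ee3 i, p + ee3 i + ee3 j} : Set E3) =
      insert (p + ee3 i + ee3 j) {p, p + ee3 i} := by
    rw [Set.pair_comm (p + ee3 i), Set.insert_comm, Set.pair_comm]
  rw [flat3, flat3, slant3, slant3, toE3_sub_single, sub_add_cancel, base,
    proj3_image_convexHull, proj3_image_convexHull, proj3_image_convexHull, Set.image_insert_eq,
    Set.image_insert_eq (a := p - ee3 j)]
  exact convexHull_insert_inter_convexHull_insert ⟨proj3 p, p, by simp, rfl⟩ hs hr hr'
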